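/- arXiv:1106.3598 — 4 statements merged into one kernel-verified Lean document; each statement's English description precedes it below -/
import Mathlib

section
/- If f : G → A is conjugation-invariant and satisfies f(βγ) = f(β) + f(γ) whenever βγ lies in a fixed normal subgroup R, and f vanishes on a set S of elements of R whose conjugates generate R, then f vanishes on all of R. -/
/-!
The elements of `R` on which `f` vanishes form a subgroup: closure under products is the
additivity on `R`, and `f 1 = 0`, `f β⁻¹ = -f β` follow from additivity applied to `1 * 1` and
`β⁻¹ * β`. Conjugation invariance makes this subgroup normal, and it contains `S`, so it contains
the normal closure of `S`, which is `R`.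
-/

namespace Subgroup

variable {G A : Type*} [Group G] [AddCommGroup A] {N : Subgroup G} {f : G → A}

theorem map_one_eq_zero_of_add (hadd : ∀ β γ : G, β * γ ∈ N → f (β * γ) = f β + f γ) :
    f 1 = 0 := by
  have h := hadd 1 1 (by simp [N.one_mem])
  rw [mul_one] at h
  exact left_eq_add.mp h

theorem map_inv_eq_neg_of_add (hadd : ∀ β γ : G, β * γ ∈ N → f (β * γ) = f β + f γ)
    (β : G) : f β⁻¹ = -f β := by
  have h := hadd β⁻¹ β (by simp [N.one_mem])
  rw [inv_mul_cancel, map_one_eq_zero_of_add hadd] at h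
  exact eq_neg_of_add_eq_zero_left h.symm

def zeroLocus (N : Subgroup G) (f : G → A)
    (hadd : ∀ β γ : G, β * γ ∈ N → f (β * γ) = f β + f γ) : Subgroup G where
  carrier := {x | x ∈ N ∧ f x = 0}
  one_mem' := ⟨N.one_mem, map_one_eq_zero_of_add hadd⟩
  mul_mem' := fun ⟨hxN, hx⟩ ⟨hyN, hy⟩ =>
    ⟨N.mul_mem hxN hyN, by rw [hadd _ _ (N.mul_mem hxN hyN), hx, hy, add_zero]⟩
  inv_mem' := fun ⟨hxN, hx⟩ =>
    ⟨N.inv_mem hxN, by rw [map_inv_eq_neg_of_add hadd, hx, neg_zero]⟩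

theorem zeroLocus_normal [N.Normal] (hadd : ∀ β γ : G, β * γ ∈ N → f (β * γ) = f β + f γ)
    (hconj : ∀ β γ : G, f (γ⁻¹ * β * γ) = f β) : (zeroLocus N f hadd).Normal where
  conj_mem x := fun ⟨hxN, hx⟩ g =>
    ⟨Normal.conj_mem ‹_› x hxN g, by simpa [hx] using hconj x g⁻¹⟩

theorem normalClosure_le_zeroLocus {S : Set G}
    (hadd : ∀ β γ : G, β * γ ∈ normalClosure S → f (β * γ) = f β + f γ)
    (hconj : ∀ β γ : G, f (γ⁻¹ * β * γ) = f β) (hvanish : ∀ s ∈ S, f s = 0) :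
    normalClosure S ≤ zeroLocus (normalClosure S) f hadd :=
  have := zeroLocus_normal hadd hconj
  normalClosure_le_normal fun s hs => ⟨subset_normalClosure hs, hvanish s hs⟩

end Subgroup

theorem stmt_7_general {G A : Type*} [Group G] [AddCommGroup A]
    (R : Subgroup G) (S : Set G)
    (hgen : Subgroup.normalClosure S = R)
    (f : G → A)
    (hconj : ∀ β γ : G, f (γ⁻¹ * β * γ) = f β)
    (hadd : ∀ β γ : G, β * γ ∈ R → f (β * γ) = f β + f γ)
    (hvanish : ∀ s ∈ S, f s = 0) :
    ∀ r ∈ R, f r = 0 := by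
  subst hgen
  exact fun r hr => (Subgroup.normalClosure_le_zeroLocus hadd hconj hvanish hr).2

theorem stmt_7 {G A : Type*} [Group G] [AddCommGroup A]
    (R : Subgroup G) [R.Normal] (S : Set G) (hS : S ⊆ (R : Set G))
    (hgen : Subgroup.normalClosure S = R)
    (f : G → A)
    (hconj : ∀ β γ : G, f (γ⁻¹ * β * γ) = f β)
    (hadd : ∀ β γ : G, β * γ ∈ R → f (β * γ) = f β + f γ)
    (hone : f 1 = 0)
    (hinv : ∀ β ∈ R, f β⁻¹ = - f β)
    (hvanish : ∀ s ∈ S, f s = 0) :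
    ∀ r ∈ R, f r = 0 :=
  stmt_7_general R S hgen f hconj hadd hvanish
end

section
/- Let R be a commutative ring and t ∈ R. The n×n lower-triangular matrix Ω_n with 1's on the diagonal and all entries below the diagonal equal to 1−t satisfies ᵀΣ̄_i Ω_n Σ_i = Ω_n for each reduced Burau matrix Σ_i (1 ≤ i ≤ n−1), where the bar denotes the substitution t ↦ t⁻¹ (assuming t invertible) and Σ_i is the identity except for the 2×2 block (rows/columns i, i+1) equal to [[1−t, 1],[t, 0]]. -/
open Matrix

/-- The (unreduced) Burau matrix of the generator `σ_{i+1}` of `B_n` (0-indexed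
block at rows/columns `i, i+1`), evaluated at `s`. -/
def burauMat (R : Type*) [CommRing R] (s : R) (n i : ℕ) : Matrix (Fin n) (Fin n) R :=
  Matrix.of fun j k =>
    if (j : ℕ) = i ∧ (k : ℕ) = i then 1 - s
    else if (j : ℕ) = i ∧ (k : ℕ) = i + 1 then 1
    else if (j : ℕ) = i + 1 ∧ (k : ℕ) = i then s
    else if (j : ℕ) = i + 1 ∧ (k : ℕ) = i + 1 then 0
    else if j = k then 1 else 0

/-- The lower-triangular matrix `Ω_n` with `1`'s on the diagonal and all entries
below the diagonal equal to `1 - s`. -/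
def omegaMat (R : Type*) [CommRing R] (s : R) (n : ℕ) : Matrix (Fin n) (Fin n) R :=
  Matrix.of fun j k => if j = k then 1 else if k < j then 1 - s else 0

/-!
The Burau matrix is a rank-one perturbation of the identity, `Σ_i(s) = 1 + u wₛᵀ` with
`u = e_i - e_{i+1}` (`burauCol`) and `wₛ = -s e_i + e_{i+1}` (`burauRow`). Expanding,
`(1 + u w'ᵀ)ᵀ Ω (1 + u w) = Ω + (Ω u) wᵀ + w' (uᵀ Ω) + (uᵀ Ω u) w' wᵀ`, and for `Ω = Ω_n` one
computes `Ω_n u = e_i - t e_{i+1} = -t w_{t⁻¹}` and `uᵀ Ω_n = -w_t`, so with `w' = w_{t⁻¹}` and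
`w = w_t` the three correction terms are multiples of `w' wᵀ` whose coefficients
`-t`, `-1` and `t + 1` cancel.
-/

theorem one_add_vecMulVec_transpose_mul_mul_one_add_vecMulVec {R m : Type*} [CommRing R]
    [Fintype m] [DecidableEq m] (Ω : Matrix m m R) (u w w' : m → R) (c : R)
    (hΩu : Ω *ᵥ u = c • w') (huΩ : u ᵥ* Ω = -w) (hwu : w ⬝ᵥ u = c - 1) :
    (1 + vecMulVec u w')ᵀ * Ω * (1 + vecMulVec u w) = Ω := by
  have expand : (1 + vecMulVec w' u) * Ω * (1 + vecMulVec u w) =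
      Ω + Ω * vecMulVec u w + vecMulVec w' u * Ω + vecMulVec w' u * Ω * vecMulVec u w := by
    noncomm_ring
  rw [transpose_add, transpose_one, transpose_vecMulVec, expand, mul_vecMulVec, vecMulVec_mul,
    vecMulVec_mul_vecMulVec, hΩu, huΩ, neg_dotProduct, hwu, smul_vecMulVec, vecMulVec_neg,
    vecMulVec_smul]
  module

def burauCol (R : Type*) [CommRing R] {n i : ℕ} (hi : i + 1 < n) : Fin n → R :=
  Pi.single ⟨i, by omega⟩ 1 - Pi.single ⟨i + 1, hi⟩ 1

def burauRow {R : Type*} [CommRing R] (s : R) {n i : ℕ} (hi : i + 1 < n) : Fin n → R :=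
  Pi.single ⟨i, by omega⟩ (-s) + Pi.single ⟨i + 1, hi⟩ 1

section Burau

variable {R : Type*} [CommRing R] {n i : ℕ}

theorem burauMat_eq_one_add_vecMulVec (s : R) (hi : i + 1 < n) :
    burauMat R s n i = 1 + vecMulVec (burauCol R hi) (burauRow s hi) := by
  ext ⟨j, hj⟩ ⟨k, hk⟩
  simp only [burauMat, burauCol, burauRow, of_apply, Matrix.add_apply, one_apply, vecMulVec_apply,
    Pi.sub_apply, Pi.add_apply, Pi.single_apply, Fin.ext_iff]
  split_ifs <;> first | ring1 | omega

theorem omegaMat_mulVec_burauCol (t : Rˣ) (hi : i + 1 < n) :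
    omegaMat R t n *ᵥ burauCol R hi = (-t : R) • burauRow ((t⁻¹ : Rˣ) : R) hi := by
  ext ⟨j, hj⟩
  simp only [omegaMat, burauCol, burauRow, mulVec_sub, mulVec_single_one, col_apply, of_apply,
    Pi.sub_apply, Pi.smul_apply, Pi.add_apply, Pi.single_apply, smul_eq_mul, Fin.mk.injEq,
    Fin.mk_lt_mk]
  split_ifs <;> first | omega | simp

theorem burauCol_vecMul_omegaMat (s : R) (hi : i + 1 < n) :
    burauCol R hi ᵥ* omegaMat R s n = -burauRow s hi := by
  ext ⟨k, hk⟩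
  simp only [omegaMat, burauCol, burauRow, sub_vecMul, single_one_vecMul, row_apply, of_apply,
    Pi.sub_apply, Pi.neg_apply, Pi.add_apply, Pi.single_apply, Fin.mk.injEq, Fin.mk_lt_mk]
  split_ifs <;> first | ring1 | omega

theorem burauRow_dotProduct_burauCol (s : R) (hi : i + 1 < n) :
    burauRow s hi ⬝ᵥ burauCol R hi = -s - 1 := by
  have hne : (⟨i, by omega⟩ : Fin n) ≠ ⟨i + 1, hi⟩ := by simp
  simp [burauRow, burauCol, hne, hne.symm, sub_eq_add_neg]

end Burau

/-- `ᵀΣ̄_i · Ω_n · Σ_i = Ω_n`, where the bar is `t ↦ t⁻¹`. -/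
theorem stmt_8 (R : Type*) [CommRing R] (t : Rˣ) (n i : ℕ) (hi : i + 1 < n) :
    (burauMat R ((t⁻¹ : Rˣ) : R) n i)ᵀ * omegaMat R (t : R) n * burauMat R (t : R) n i =
      omegaMat R (t : R) n := by
  rw [burauMat_eq_one_add_vecMulVec _ hi, burauMat_eq_one_add_vecMulVec _ hi]
  exact one_add_vecMulVec_transpose_mul_mul_one_add_vecMulVec _ _ _ _ _
    (omegaMat_mulVec_burauCol t hi) (burauCol_vecMul_omegaMat _ hi)
    (burauRow_dotProduct_burauCol _ hi)
end

section
/- Any class in Q(t)^σ-fixed-field^× modulo norms from Q(t)^× (where σ(t)=t⁻¹ and the norm is x ↦ x·σ(x)) can be represented by a fraction D(t)/t^d where D is a palindromic polynomial of degree 2d not divisible by t (i.e., t^{2d} D(1/t) = D(t)). -/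
/-!
Write `x = p/q` with `q` the denominator and take `y = q`. Since `σ q = t^{-deg q} q^rev`, the
element `x · q · σ q` equals `t^{a - deg q} D` where `p · q^rev = t^a D` and `D(0) ≠ 0`. It is
`σ`-fixed because `x` is, and comparing it with its image `t^{deg q - a - deg D} D^rev` gives
`D · t^{2a + deg D} = D^rev · t^{2 deg q}`; as neither `D` nor `D^rev` is divisible by `t`, this
forces `2a + deg D = 2 deg q` and `D^rev = D`.
-/

open Polynomial

namespace Polynomial

variable {R : Type*} [Semiring R]

theorem reverse_eq_of_mul_X_pow_eq_reverse_mul_X_pow {P : R[X]} (hP : P.coeff 0 ≠ 0) {i j : ℕ}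
    (h : P * X ^ i = P.reverse * X ^ j) : i = j ∧ P.reverse = P := by
  have hP0 : P ≠ 0 := fun h0 => hP (by simp [h0])
  have hrev0 : P.reverse.coeff 0 ≠ 0 := by
    rwa [coeff_zero_reverse, leadingCoeff_ne_zero]
  have hij : i = j := by
    have := congrArg natTrailingDegree h
    rwa [natTrailingDegree_mul_X_pow hP0,
      natTrailingDegree_mul_X_pow (fun h0 => hrev0 (by simp [h0])),
      natTrailingDegree_eq_zero.mpr (Or.inr hP), natTrailingDegree_eq_zero.mpr (Or.inr hrev0),
      zero_add, zero_add] at this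
  subst hij
  exact ⟨rfl, ((isRegular_X_pow i).right h).symm⟩

end Polynomial

namespace RatFunc

variable {F : Type*} [FunLike F (RatFunc ℚ) (RatFunc ℚ)] [RingHomClass F (RatFunc ℚ) (RatFunc ℚ)]
  (σ : F)

theorem ringHom_comp_algebraMap_eq_eval₂_X_inv (hσX : σ X = X⁻¹) :
    (σ : RatFunc ℚ →+* RatFunc ℚ).comp (algebraMap ℚ[X] (RatFunc ℚ)) =
      eval₂RingHom (algebraMap ℚ (RatFunc ℚ)) X⁻¹ := by
  refine ringHom_ext (fun a => ?_) (by simpa [algebraMap_X] using hσX)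
  simp

theorem map_algebraMap_eq_reverse_mul_X_inv_pow (hσX : σ X = X⁻¹) (p : ℚ[X]) :
    σ (algebraMap ℚ[X] (RatFunc ℚ) p) =
      algebraMap ℚ[X] (RatFunc ℚ) p.reverse * X⁻¹ ^ p.natDegree := by
  let : Invertible (X⁻¹ : RatFunc ℚ) := invertibleOfNonzero (inv_ne_zero X_ne_zero)
  have h := eval₂_reverse_mul_pow (algebraMap ℚ (RatFunc ℚ)) (X⁻¹ : RatFunc ℚ) p
  rw [invOf_eq_inv, inv_inv] at h
  rw [← RingHom.coe_coe σ, ← RingHom.comp_apply, ringHom_comp_algebraMap_eq_eval₂_X_inv σ hσX,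
    coe_eval₂RingHom, ← h]
  congr 1
  rw [← aeval_def, ← algebraMap_X, aeval_algebraMap_apply, aeval_X_left_apply]

theorem mul_denom_mul_map_denom_mul_X_pow (hσX : σ X = X⁻¹) (x : RatFunc ℚ) :
    x * (algebraMap ℚ[X] (RatFunc ℚ) x.denom * σ (algebraMap ℚ[X] (RatFunc ℚ) x.denom)) *
        X ^ x.denom.natDegree =
      algebraMap ℚ[X] (RatFunc ℚ) (x.num * x.denom.reverse) := by
  have hx : x * algebraMap ℚ[X] (RatFunc ℚ) x.denom = algebraMap ℚ[X] (RatFunc ℚ) x.num :=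
    (eq_div_iff (algebraMap_ne_zero x.denom_ne_zero)).mp (num_div_denom x).symm
  have hX : (X : RatFunc ℚ)⁻¹ ^ x.denom.natDegree * X ^ x.denom.natDegree = 1 := by
    rw [← mul_pow, inv_mul_cancel₀ X_ne_zero, one_pow]
  rw [map_algebraMap_eq_reverse_mul_X_inv_pow σ hσX, map_mul, ← hx]
  linear_combination x * algebraMap ℚ[X] (RatFunc ℚ) x.denom *
    algebraMap ℚ[X] (RatFunc ℚ) x.denom.reverse * hX

theorem reverse_eq_and_natDegree_eq_of_map_eq_self (hσX : σ X = X⁻¹) {z : RatFunc ℚ}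
    (hz : σ z = z) {D : ℚ[X]} (hD : D.coeff 0 ≠ 0) {a n : ℕ}
    (hzX : z * X ^ n = X ^ a * algebraMap ℚ[X] (RatFunc ℚ) D) :
    D.reverse = D ∧ 2 * a + D.natDegree = 2 * n := by
  have hX : (X : RatFunc ℚ) ≠ 0 := X_ne_zero
  have hzX' : z * X⁻¹ ^ n =
      X⁻¹ ^ a * (algebraMap ℚ[X] (RatFunc ℚ) D.reverse * X⁻¹ ^ D.natDegree) := by
    simpa only [map_mul, map_pow, hz, hσX, map_algebraMap_eq_reverse_mul_X_inv_pow σ hσX]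
      using congrArg σ hzX
  simp only [inv_pow] at hzX'
  field_simp at hzX'
  have hpal : D * Polynomial.X ^ (2 * a + D.natDegree) = D.reverse * Polynomial.X ^ (2 * n) := by
    apply algebraMap_injective ℚ
    simp only [map_mul, map_pow, algebraMap_X]
    linear_combination X ^ n * hzX' - X ^ (a + D.natDegree) * hzX
  obtain ⟨hdeg, hrev⟩ := reverse_eq_of_mul_X_pow_eq_reverse_mul_X_pow hD hpal
  exact ⟨hrev, hdeg⟩

end RatFunc

/-- any σ-fixed class of `Q(t)^×` modulo norms is represented by
`D(t)/t^d` with `D` palindromic of degree `2d` and not divisible by `t`. -/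
theorem stmt_15 (σ : RatFunc ℚ ≃+* RatFunc ℚ)
    (hσX : σ RatFunc.X = (RatFunc.X)⁻¹) (hσinv : ∀ x, σ (σ x) = x)
    (x : RatFunc ℚ) (hx : x ≠ 0) (hfix : σ x = x) :
    ∃ (D : Polynomial ℚ) (d : ℕ) (y : RatFunc ℚ), y ≠ 0 ∧
      D.coeff 0 ≠ 0 ∧ D.natDegree = 2 * d ∧ D.reverse = D ∧
      x * (y * σ y) = algebraMap (Polynomial ℚ) (RatFunc ℚ) D / RatFunc.X ^ d := by
  have hE : x.num * x.denom.reverse ≠ 0 :=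
    mul_ne_zero (RatFunc.num_ne_zero hx) (reverse_eq_zero.not.mpr x.denom_ne_zero)
  obtain ⟨D, hfac, hndvd⟩ := exists_eq_pow_rootMultiplicity_mul_and_not_dvd _ hE 0
  rw [C_0, sub_zero] at hfac hndvd
  have hD : D.coeff 0 ≠ 0 := mt X_dvd_iff.mpr hndvd
  have hzX := RatFunc.mul_denom_mul_map_denom_mul_X_pow σ hσX x
  rw [hfac, map_mul, map_pow, RatFunc.algebraMap_X] at hzX
  set a := (x.num * x.denom.reverse).rootMultiplicity 0
  set n := x.denom.natDegree
  set y := algebraMap ℚ[X] (RatFunc ℚ) x.denom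
  have hz : σ (x * (y * σ y)) = x * (y * σ y) := by
    rw [map_mul, map_mul, hσinv, hfix, mul_comm (σ y)]
  obtain ⟨hrev, hdeg⟩ := RatFunc.reverse_eq_and_natDegree_eq_of_map_eq_self σ hσX hz hD hzX
  refine ⟨D, n - a, y, RatFunc.algebraMap_ne_zero x.denom_ne_zero, hD, by omega, hrev,
    eq_div_of_mul_eq (pow_ne_zero _ RatFunc.X_ne_zero)
      (mul_left_cancel₀ (pow_ne_zero a RatFunc.X_ne_zero) ?_)⟩
  rw [← hzX, mul_left_comm, ← pow_add, Nat.add_sub_cancel' (by omega)]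
end

section
/- Uniqueness of the minimal palindromic representative: let R ∈ Q[t] be palindromic of degree 2d, coprime to t, squarefree with each irreducible factor P satisfying P̃ = cP for a scalar c. If Q ∈ Q[t] and there exist coprime F, G ∈ Q[t] and an integer k with R·G·G̃ = t^k·Q·F·F̃, then R divides Q. -/
/-!
Since `R` is squarefree it suffices to show that every prime `p ∣ R` divides `Q`. Such a `p`
is not `t`, and `p̃ ~ p`, so `p` divides `F̃` exactly when it divides `F`. If `p ∤ Q`, then `p`
divides `F F̃`, hence `p ∣ F` and `p² ∣ F F̃ ∣ R G G̃`; as `F` and `G` are coprime, `p ∤ G G̃`,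
so `p² ∣ R`, contradicting squarefreeness.
-/

open Polynomial

theorem Squarefree.dvd_of_forall_prime_dvd {α : Type*} [CommMonoidWithZero α]
    [UniqueFactorizationMonoid α] {r q : α} (hr : Squarefree r)
    (h : ∀ p : α, Prime p → p ∣ r → p ∣ q) : r ∣ q := by
  nontriviality α
  induction r using UniqueFactorizationMonoid.induction_on_prime generalizing q with
  | h₁ => exact absurd hr not_squarefree_zero
  | h₂ u hu => exact hu.dvd
  | h₃ a p _ hp ih =>
    obtain ⟨q', rfl⟩ := h p hp (dvd_mul_right p a)
    have hpa : ¬ p ∣ a := fun hpa ↦ hp.not_isUnit (hr p (mul_dvd_mul_left p hpa))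
    refine mul_dvd_mul_left p (ih (hr.squarefree_of_dvd (dvd_mul_left a p)) fun s hs hsa ↦ ?_)
    refine (hs.dvd_mul.mp (h s hs (hsa.mul_left p))).resolve_left fun hsp ↦ hpa ?_
    exact (hs.associated_of_dvd hp hsp).symm.dvd.trans hsa

namespace Polynomial

section Semiring

variable {A : Type*} [Semiring A] [NoZeroDivisors A] {P F : A[X]}

theorem reverse_dvd_reverse (h : P ∣ F) : P.reverse ∣ F.reverse := by
  obtain ⟨S, rfl⟩ := h
  rw [reverse_mul_of_domain]
  exact dvd_mul_right _ _

-- `F.reverse.reverse` is `F` stripped of its factors `X`, so only a divisibility survives.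
theorem reverse_dvd_of_dvd_reverse (h : P ∣ F.reverse) : P.reverse ∣ F := by
  rcases eq_or_ne F 0 with rfl | hF
  · exact dvd_zero _
  obtain ⟨S, hS⟩ := h
  have hPS : P * S ≠ 0 := hS ▸ mt reverse_eq_zero.mp hF
  have hdeg : P.natDegree + S.natDegree ≤ F.natDegree := by
    rw [← natDegree_mul (left_ne_zero_of_mul hPS) (right_ne_zero_of_mul hPS), ← hS]
    exact reverse_natDegree_le F
  have hF_eq : F = reflect F.natDegree (P * S) := by
    rw [← hS, reverse, reflect_reflect]
  have hsplit := reflect_mul P S le_rfl (Nat.le_sub_of_add_le' hdeg)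
  rw [Nat.add_sub_cancel' (le_of_add_le_left hdeg)] at hsplit
  rw [hF_eq, hsplit]
  exact dvd_mul_right _ _

theorem dvd_reverse_iff (hP : P ∣ P.reverse) : P ∣ F.reverse ↔ P ∣ F :=
  ⟨fun h ↦ hP.trans (reverse_dvd_of_dvd_reverse h),
    fun h ↦ hP.trans (reverse_dvd_reverse h)⟩

end Semiring

theorem _root_.Prime.dvd_mul_reverse_iff {A : Type*} [CommSemiring A] [NoZeroDivisors A]
    {p : A[X]} (hp : Prime p) (hpr : p ∣ p.reverse) (F : A[X]) :
    p ∣ F * F.reverse ↔ p ∣ F := by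
  rw [hp.dvd_mul, dvd_reverse_iff hpr, or_self]

theorem _root_.Prime.dvd_of_mul_mul_reverse_eq {A : Type*} [CommRing A] [IsDomain A]
    {p R Q F G : A[X]} (hp : Prime p) (hpr : p ∣ p.reverse) (hpX : ¬ p ∣ X)
    (hR : Squarefree R) (hpR : p ∣ R) (hFG : IsCoprime F G) (k : ℕ)
    (heq : R * G * G.reverse = X ^ k * (Q * F * F.reverse)) : p ∣ Q := by
  by_contra hpQ
  have hpRHS : p ∣ X ^ k * (Q * (F * F.reverse)) := by
    rw [← mul_assoc Q, ← heq]
    exact (hpR.mul_right G).mul_right _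
  have hpF : p ∣ F := by
    rcases hp.dvd_mul.mp hpRHS with hpXk | hpQFF
    · exact absurd (hp.dvd_of_dvd_pow hpXk) hpX
    · exact (hp.dvd_mul_reverse_iff hpr F).mp ((hp.dvd_mul.mp hpQFF).resolve_left hpQ)
  have hpG : ¬ p ∣ G * G.reverse := fun h ↦
    hp.not_isUnit (hFG.isUnit_of_dvd' hpF ((hp.dvd_mul_reverse_iff hpr G).mp h))
  have hp2 : p ^ 2 ∣ R * (G * G.reverse) := calc
    p ^ 2 ∣ F * F.reverse := sq p ▸ mul_dvd_mul hpF ((dvd_reverse_iff hpr).mpr hpF)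
    _ ∣ X ^ k * (Q * (F * F.reverse)) := (dvd_mul_left _ Q).mul_left _
    _ = R * (G * G.reverse) := by rw [← mul_assoc Q, ← heq, mul_assoc]
  exact hp.not_isUnit (hR p (sq p ▸ hp.pow_dvd_of_dvd_mul_right 2 hpG hp2))

end Polynomial

theorem stmt_17_general (R : Polynomial ℚ)
    (hRt : R.coeff 0 ≠ 0)
    (hsq : Squarefree R)
    (hfac : ∀ P : Polynomial ℚ, Irreducible P → P ∣ R → ∃ c : ℚ, P.reverse = c • P)
    (Q F G : Polynomial ℚ) (hFG : IsCoprime F G) (k : ℕ)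
    (heq : R * G * G.reverse = Polynomial.X ^ k * (Q * F * F.reverse)) :
    R ∣ Q := by
  refine hsq.dvd_of_forall_prime_dvd fun p hp hpR ↦ ?_
  obtain ⟨c, hc⟩ := hfac p hp.irreducible hpR
  have hpr : p ∣ p.reverse := by
    rw [hc, smul_eq_C_mul]
    exact dvd_mul_left p _
  have hpX : ¬ p ∣ X := fun h ↦
    hRt (X_dvd_iff.mp ((hp.associated_of_dvd prime_X h).symm.dvd.trans hpR))
  exact hp.dvd_of_mul_mul_reverse_eq hpr hpX hsq hpR hFG k heq

/-- uniqueness of the minimal palindromic representative. -/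
theorem stmt_17 (R : Polynomial ℚ) (d : ℕ) (hR0 : R ≠ 0)
    (hRt : R.coeff 0 ≠ 0) (hdeg : R.natDegree = 2 * d) (hpal : R.reverse = R)
    (hsq : Squarefree R)
    (hfac : ∀ P : Polynomial ℚ, Irreducible P → P ∣ R → ∃ c : ℚ, P.reverse = c • P)
    (Q F G : Polynomial ℚ) (hFG : IsCoprime F G) (k : ℕ)
    (heq : R * G * G.reverse = Polynomial.X ^ k * (Q * F * F.reverse)) :
    R ∣ Q :=
  stmt_17_general R hRt hsq hfac Q F G hFG k heq
end
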